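/- The dispersion-component (σ-component) of the score function of the generalized Heckman model has conditional mean zero given selection: ∫_{-∞}^{∞} [ z(y)² − 1 − (ρ/√(1 − ρ²)) z(y) φ(ζ(y))/Φ(ζ(y)) ] · (1/(σ Φ(μ₂))) φ(z(y)) Φ(ζ(y)) dy = 0. -/

import Mathlib

open MeasureTheory Set

/-- Standard normal density. -/
noncomputable def phi (t : ℝ) : ℝ := Real.exp (-(t ^ 2) / 2) / Real.sqrt (2 * Real.pi)

/-- Standard normal cumulative distribution function. -/
noncomputable def Phi (x : ℝ) : ℝ := ∫ t in Set.Iic x, phi t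

/-!
In the standardized variable `t = (y - μ₁) / σ` one has `ζ = a + c t` with `c = ρ / √(1 - ρ²)`,
and the integrand becomes `(σ Φ(μ₂))⁻¹` times the derivative of `-t φ(t) Φ(a + c t)`, because
`φ'(t) = -t φ(t)` and `Φ' = φ`. This antiderivative and its derivative are integrable (Gaussian
moments times bounded factors), so the integral of the derivative over `ℝ` vanishes.
-/

open ProbabilityTheory

lemma phi_eq_gaussianPDFReal : phi = gaussianPDFReal 0 1 := by
  ext t
  simp [phi, gaussianPDFReal, div_eq_inv_mul]

lemma phi_pos (t : ℝ) : 0 < phi t :=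
  phi_eq_gaussianPDFReal ▸ gaussianPDFReal_pos 0 1 t one_ne_zero

lemma integrable_phi : Integrable phi :=
  phi_eq_gaussianPDFReal ▸ integrable_gaussianPDFReal 0 1

lemma integral_phi : ∫ t, phi t = 1 :=
  phi_eq_gaussianPDFReal ▸ integral_gaussianPDFReal_eq_one 0 one_ne_zero

lemma continuous_phi : Continuous phi := by
  unfold phi
  fun_prop

lemma phi_le_inv_sqrt_two_pi (t : ℝ) : phi t ≤ (√(2 * Real.pi))⁻¹ := by
  rw [phi, div_eq_inv_mul]
  refine mul_le_of_le_one_right (by positivity) (Real.exp_le_one_iff.2 ?_)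
  nlinarith [sq_nonneg t]

lemma hasDerivAt_phi (t : ℝ) : HasDerivAt phi (-t * phi t) t := by
  have h := ((((hasDerivAt_pow 2 t).neg).div_const 2).exp).div_const (√(2 * Real.pi))
  refine h.congr_deriv ?_
  simp only [phi, Pi.neg_apply]
  ring

lemma integrable_pow_mul_phi (n : ℕ) : Integrable fun t : ℝ => t ^ n * phi t := by
  have h := (integrable_rpow_mul_exp_neg_mul_sq (b := 1 / 2) (by norm_num)
    (by linarith [n.cast_nonneg (α := ℝ)] : (-1 : ℝ) < n)).div_const (√(2 * Real.pi))
  refine h.congr (Filter.Eventually.of_forall fun t => ?_)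
  simp only [Real.rpow_natCast, phi, mul_div_assoc]
  ring_nf

lemma Phi_nonneg (x : ℝ) : 0 ≤ Phi x :=
  setIntegral_nonneg measurableSet_Iic fun t _ => (phi_pos t).le

lemma Phi_le_one (x : ℝ) : Phi x ≤ 1 :=
  integral_phi ▸ setIntegral_le_integral integrable_phi (ae_of_all _ fun t => (phi_pos t).le)

lemma Phi_pos (x : ℝ) : 0 < Phi x := by
  rw [Phi, setIntegral_pos_iff_support_of_nonneg_ae (ae_of_all _ fun t => (phi_pos t).le)
    integrable_phi.integrableOn, Function.support_eq_univ fun t => (phi_pos t).ne',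
    Set.univ_inter, Real.volume_Iic]
  exact ENNReal.zero_lt_top

lemma hasDerivAt_Phi (x : ℝ) : HasDerivAt Phi (phi x) x := by
  have h := (intervalIntegral.integral_hasDerivAt_right (a := x) (b := x)
    integrable_phi.intervalIntegrable (continuous_phi.stronglyMeasurableAtFilter _ _)
    continuous_phi.continuousAt).const_add (Phi x)
  refine h.congr_of_eventuallyEq (Filter.Eventually.of_forall fun y => ?_)
  dsimp only
  rw [← intervalIntegral.integral_Iic_sub_Iic integrable_phi.integrableOn
    integrable_phi.integrableOn, Phi, Phi]
  ring

lemma continuous_Phi : Continuous Phi :=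
  continuous_iff_continuousAt.2 fun x => (hasDerivAt_Phi x).continuousAt

lemma hasDerivAt_neg_mul_phi_mul_Phi (a c t : ℝ) :
    HasDerivAt (fun t => -t * phi t * Phi (a + c * t))
      ((t ^ 2 - 1) * phi t * Phi (a + c * t) - c * (t * phi t * phi (a + c * t))) t := by
  have hlin : HasDerivAt (fun t => a + c * t) c t := by
    simpa using ((hasDerivAt_id t).const_mul c).const_add a
  have hPhi := (hasDerivAt_Phi (a + c * t)).comp t hlin
  refine (((hasDerivAt_neg' t).mul (hasDerivAt_phi t)).mul hPhi).congr_deriv ?_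
  simp only [Function.comp_apply, Pi.mul_apply]
  ring

theorem integral_sq_sub_one_mul_phi_mul_Phi (a c : ℝ) :
    ∫ t, ((t ^ 2 - 1) * phi t * Phi (a + c * t) - c * (t * phi t * phi (a + c * t))) = 0 := by
  have hPhi : Continuous fun t => Phi (a + c * t) := continuous_Phi.comp (by fun_prop)
  have hphi : Continuous fun t => phi (a + c * t) := continuous_phi.comp (by fun_prop)
  have hPhi_bdd : ∀ᵐ t, ‖Phi (a + c * t)‖ ≤ 1 := ae_of_all _ fun t => by
    rw [Real.norm_of_nonneg (Phi_nonneg _)]; exact Phi_le_one _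
  have hphi_bdd : ∀ᵐ t, ‖phi (a + c * t)‖ ≤ (√(2 * Real.pi))⁻¹ := ae_of_all _ fun t => by
    rw [Real.norm_of_nonneg (phi_pos _).le]; exact phi_le_inv_sqrt_two_pi _
  have hmoment1 : Integrable fun t : ℝ => t * phi t := by
    simpa using integrable_pow_mul_phi 1
  have hmoment2 : Integrable fun t : ℝ => (t ^ 2 - 1) * phi t := by
    convert (integrable_pow_mul_phi 2).sub integrable_phi using 1
    ext t
    simp [sub_mul]
  refine integral_eq_zero_of_hasDerivAt_of_integrable (hasDerivAt_neg_mul_phi_mul_Phi a c) ?_ ?_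
  · exact (hmoment2.mul_bdd hPhi.aestronglyMeasurable hPhi_bdd).sub
      ((hmoment1.mul_bdd hphi.aestronglyMeasurable hphi_bdd).const_mul c)
  · simpa [neg_mul] using (hmoment1.mul_bdd hPhi.aestronglyMeasurable hPhi_bdd).neg

theorem GH_sigma_score_conditional_mean_zero_general (μ₁ μ₂ σ ρ : ℝ)
    (z ζ : ℝ → ℝ)
    (hz : ∀ y, z y = (y - μ₁) / σ)
    (hζ : ∀ y, ζ y = (μ₂ + ρ * z y) / Real.sqrt (1 - ρ ^ 2)) :
    (∫ y : ℝ, (z y ^ 2 - 1 - (ρ / Real.sqrt (1 - ρ ^ 2)) * z y * (phi (ζ y) / Phi (ζ y)))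
        * ((1 / (σ * Phi μ₂)) * phi (z y) * Phi (ζ y))) = 0 := by
  set a := μ₂ / Real.sqrt (1 - ρ ^ 2)
  set c := ρ / Real.sqrt (1 - ρ ^ 2)
  set g : ℝ → ℝ := fun t =>
    (t ^ 2 - 1) * phi t * Phi (a + c * t) - c * (t * phi t * phi (a + c * t))
  have hζz : ∀ y, ζ y = a + c * z y := fun y => by rw [hζ, add_div, mul_div_right_comm]
  have hintegrand : ∀ y, (z y ^ 2 - 1 - c * z y * (phi (ζ y) / Phi (ζ y)))
      * ((1 / (σ * Phi μ₂)) * phi (z y) * Phi (ζ y)) = (σ * Phi μ₂)⁻¹ * g ((y - μ₁) / σ) := by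
    intro y
    have hP := (Phi_pos (ζ y)).ne'
    rw [← hz]
    simp only [g, ← hζz]
    field_simp
  simp_rw [hintegrand]
  rw [integral_const_mul, integral_sub_right_eq_self (fun y => g (y / σ)),
    Measure.integral_comp_div, integral_sq_sub_one_mul_phi_mul_Phi, smul_zero, mul_zero]

theorem GH_sigma_score_conditional_mean_zero (μ₁ μ₂ σ ρ : ℝ) (hσ : 0 < σ) (hρ₁ : -1 < ρ) (hρ₂ : ρ < 1)
    (z ζ : ℝ → ℝ)
    (hz : ∀ y, z y = (y - μ₁) / σ)
    (hζ : ∀ y, ζ y = (μ₂ + ρ * z y) / Real.sqrt (1 - ρ ^ 2)) :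
    (∫ y : ℝ, (z y ^ 2 - 1 - (ρ / Real.sqrt (1 - ρ ^ 2)) * z y * (phi (ζ y) / Phi (ζ y)))
        * ((1 / (σ * Phi μ₂)) * phi (z y) * Phi (ζ y))) = 0 :=
  GH_sigma_score_conditional_mean_zero_general μ₁ μ₂ σ ρ z ζ hz hζ
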